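/- arXiv:2604.27801 — 3 statements merged into one kernel-verified Lean document; each statement's English description precedes it below -/
import Mathlib

section
/- Let a > b be real numbers and let r_{k-1} = e^{2a}, r_k = e^{2b}, and μ ∈ ℝ with μ² ≤ 1/4. Suppose the Lovász condition is violated, i.e., r_k < (δ - μ²) r_{k-1} for some δ ∈ (1/4, 1]. Define r'_{k-1} = r_k + μ² r_{k-1} and r'_k = r_{k-1} r_k / r'_{k-1}, and set a' = (1/2) ln r'_{k-1}, b' = (1/2) ln r'_k. Then a' + b' = a + b, and a' < a. Moreover, if μ ≠ 0, then b < a' (so, setting ε = a - a', we have ε ∈ (0, a - b)). -/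
/-- A non-degenerate Lovász swap is a T-transform on the two adjacent
GSO log-norms: it preserves their sum, strictly lowers the larger one,
and (when μ ≠ 0) stops strictly above the smaller one. -/
theorem lovasz_swap_is_T_transform
    (a b μ δ : ℝ) (hab : a > b)
    (hμ : μ ^ 2 ≤ 1 / 4) (hδ1 : 1 / 4 < δ) (hδ2 : δ ≤ 1)
    (r1 r2 r1' r2' a' b' : ℝ)
    (hr1 : r1 = Real.exp (2 * a)) (hr2 : r2 = Real.exp (2 * b))
    (hlov : r2 < (δ - μ ^ 2) * r1)
    (hr1' : r1' = r2 + μ ^ 2 * r1)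
    (hr2' : r2' = r1 * r2 / r1')
    (ha' : a' = (1 / 2) * Real.log r1')
    (hb' : b' = (1 / 2) * Real.log r2') :
    a' + b' = a + b ∧ a' < a ∧ (μ ≠ 0 → b < a') := by
  have h1 : r1 > 0 := hr1 ▸ Real.exp_pos _
  have h2 : r2 > 0 := hr2 ▸ Real.exp_pos _
  have h1' : r1' > 0 := by
    rw [hr1']; positivity
  have h2' : r2' > 0 := by rw [hr2']; positivity
  have hlog1 : Real.log r1 = 2 * a := by rw [hr1, Real.log_exp]
  have hlog2 : Real.log r2 = 2 * b := by rw [hr2, Real.log_exp]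
  have hlt : r1' < r1 := by
    rw [hr1']
    calc r2 + μ ^ 2 * r1 < (δ - μ ^ 2) * r1 + μ ^ 2 * r1 := by nlinarith
    _ = δ * r1 := by ring
    _ ≤ r1 := by nlinarith
  refine ⟨?_, ?_, ?_⟩
  · have : Real.log r1' + Real.log r2' = Real.log r1 + Real.log r2 := by
      rw [hr2', Real.log_div (by positivity) (ne_of_gt h1'),
        Real.log_mul (ne_of_gt h1) (ne_of_gt h2)]
      ring
    rw [ha', hb']; rw [hlog1, hlog2] at this; linarith
  · have := Real.log_lt_log h1' hlt
    rw [ha']; linarith [hlog1 ▸ this]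
  · intro hμ0
    have : r2 < r1' := by
      rw [hr1']; nlinarith [pow_pos (abs_pos.mpr hμ0) 2, sq_abs μ]
    have := Real.log_lt_log h2 this
    rw [ha']; linarith [hlog2 ▸ this]
end

section
/- Fix d ≥ 1, L ∈ ℝ, and c > 0. Define p*_i = L/d + c·(d + 1 - 2i)/2 for i = 1,…,d. Then p* satisfies ∑_{i=1}^d p*_i = L and p*_{i-1} - p*_i = c for all i = 2,…,d. Moreover, for every p ∈ ℝ^d with ∑_{i=1}^d p_i = L and p_{i-1} - p_i ≥ c for all i = 2,…,d, one has ∑_{i=1}^d p_i² ≥ ∑_{i=1}^d (p*_i)², with equality if and only if p = p*. -/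
/-!
Write `p = p* + q`. The constraints make `q` have zero sum and be nonincreasing (each gap of `p`
is at least the gap `c` of `p*`), and `p*` is nonincreasing too, so by Chebyshev's sum inequality
`∑ p*ᵢ qᵢ ≥ (∑ p*ᵢ)(∑ qᵢ) / d = 0`. Hence `∑ pᵢ² = ∑ p*ᵢ² + 2 ∑ p*ᵢ qᵢ + ∑ qᵢ² ≥ ∑ p*ᵢ²`,
with equality exactly when `q = 0`.
-/

open Finset

section OrderedRing

variable {ι α : Type*} [CommRing α]

theorem Finset.sum_sq_eq_sum_sq_add_sum_mul_sub_add_sum_sq_sub (s : Finset ι) (a b : ι → α) :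
    ∑ i ∈ s, b i ^ 2 =
      ∑ i ∈ s, a i ^ 2 + 2 * ∑ i ∈ s, a i * (b i - a i) + ∑ i ∈ s, (b i - a i) ^ 2 := by
  rw [mul_sum, ← sum_add_distrib, ← sum_add_distrib]
  exact sum_congr rfl fun i _ => by ring

variable [LinearOrder α] [IsStrictOrderedRing α] {s : Finset ι} {a b : ι → α}

theorem MonovaryOn.sum_mul_nonneg_of_sum_eq_zero {f g : ι → α} (hfg : MonovaryOn f g s)
    (hg : ∑ i ∈ s, g i = 0) : 0 ≤ ∑ i ∈ s, f i * g i := by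
  obtain rfl | hs := s.eq_empty_or_nonempty
  · simp
  have hcheb := hfg.sum_mul_sum_le_card_mul_sum
  rw [hg, mul_zero] at hcheb
  exact (mul_nonneg_iff_of_pos_left (by exact_mod_cast hs.card_pos)).mp hcheb

theorem Finset.sum_sq_le_sum_sq_of_sum_mul_sub_nonneg (h : 0 ≤ ∑ i ∈ s, a i * (b i - a i)) :
    ∑ i ∈ s, a i ^ 2 ≤ ∑ i ∈ s, b i ^ 2 := by
  rw [sum_sq_eq_sum_sq_add_sum_mul_sub_add_sum_sq_sub s a b]
  have := sum_nonneg fun i (_ : i ∈ s) => sq_nonneg (b i - a i)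
  linarith

theorem Finset.sum_sq_eq_sum_sq_iff_of_sum_mul_sub_nonneg
    (h : 0 ≤ ∑ i ∈ s, a i * (b i - a i)) :
    ∑ i ∈ s, b i ^ 2 = ∑ i ∈ s, a i ^ 2 ↔ ∀ i ∈ s, b i = a i := by
  constructor
  · intro heq
    have hsq : ∑ i ∈ s, (b i - a i) ^ 2 = 0 := by
      have := sum_nonneg fun i (_ : i ∈ s) => sq_nonneg (b i - a i)
      rw [sum_sq_eq_sum_sq_add_sum_mul_sub_add_sum_sq_sub s a b] at heq
      linarith
    intro i hi
    have := (sum_eq_zero_iff_of_nonneg fun i _ => sq_nonneg (b i - a i)).mp hsq i hi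
    exact sub_eq_zero.mp (pow_eq_zero_iff two_ne_zero |>.mp this)
  · exact fun h => sum_congr rfl fun i hi => by rw [h i hi]

end OrderedRing

theorem sum_Icc_one_natCast (n : ℕ) : ∑ i ∈ Icc 1 n, (i : ℝ) = n * (n + 1) / 2 := by
  induction n with
  | zero => simp
  | succ n ih =>
    rw [sum_Icc_succ_top (by omega), ih]
    push_cast
    ring

noncomputable def gsaProfile (d : ℕ) (L c : ℝ) (i : ℕ) : ℝ :=
  L / d + c * ((d : ℝ) + 1 - 2 * i) / 2

section GsaProfile

variable {d : ℕ} {L c : ℝ}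

theorem sum_gsaProfile (hd : d ≠ 0) : ∑ i ∈ Icc 1 d, gsaProfile d L c i = L := by
  have hd' : (d : ℝ) ≠ 0 := by exact_mod_cast hd
  simp only [gsaProfile, sum_add_distrib, ← sum_div, ← mul_sum, sum_sub_distrib, ← mul_sum,
    sum_Icc_one_natCast, sum_const, Nat.card_Icc, add_tsub_cancel_right, nsmul_eq_mul]
  field_simp
  ring

theorem gsaProfile_sub_one_sub {i : ℕ} (hi : 1 ≤ i) :
    gsaProfile d L c (i - 1) - gsaProfile d L c i = c := by
  simp only [gsaProfile, Nat.cast_sub hi]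
  ring

theorem gsaProfile_antitone (hc : 0 ≤ c) : Antitone (gsaProfile d L c) := by
  intro i j hij
  have : (i : ℝ) ≤ j := by exact_mod_cast hij
  simp only [gsaProfile]
  gcongr

theorem antitoneOn_sub_gsaProfile {p : ℕ → ℝ}
    (hgap : ∀ i, 2 ≤ i → i ≤ d → p (i - 1) - p i ≥ c) :
    AntitoneOn (p - gsaProfile d L c) (Set.Icc 1 d) := by
  refine antitoneOn_of_le_sub_one Set.ordConnected_Icc fun i _ hi hi' => ?_
  have hstep := gsaProfile_sub_one_sub (d := d) (L := L) (c := c) (hi.1)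
  have := hgap i (by simp only [Set.mem_Icc] at hi'; omega) hi.2
  simp only [Pi.sub_apply]
  linarith

end GsaProfile

/-- The GSA arithmetic progression of slope -c is feasible and is the unique
minimizer of the sum of squares among profiles with fixed sum L and all
adjacent gaps at least c. -/
theorem gsa_min_variance
    (d : ℕ) (hd : 1 ≤ d) (L c : ℝ) (hc : 0 < c)
    (pstar : ℕ → ℝ)
    (hpstar : ∀ i, pstar i = L / d + c * ((d : ℝ) + 1 - 2 * i) / 2) :
    (∑ i ∈ Finset.Icc 1 d, pstar i = L) ∧
    (∀ i, 2 ≤ i → i ≤ d → pstar (i - 1) - pstar i = c) ∧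
    (∀ p : ℕ → ℝ, (∑ i ∈ Finset.Icc 1 d, p i = L) →
      (∀ i, 2 ≤ i → i ≤ d → p (i - 1) - p i ≥ c) →
      ((∑ i ∈ Finset.Icc 1 d, (p i) ^ 2 ≥ ∑ i ∈ Finset.Icc 1 d, (pstar i) ^ 2) ∧
       ((∑ i ∈ Finset.Icc 1 d, (p i) ^ 2 = ∑ i ∈ Finset.Icc 1 d, (pstar i) ^ 2) ↔
         ∀ i, 1 ≤ i → i ≤ d → p i = pstar i))) := by
  obtain rfl : pstar = gsaProfile d L c := funext hpstar
  have hsum_star := sum_gsaProfile (L := L) (c := c) (Nat.one_le_iff_ne_zero.mp hd)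
  refine ⟨hsum_star, fun i hi _ => gsaProfile_sub_one_sub (by omega), fun p hsum hgap => ?_⟩
  have hsum_sub : ∑ i ∈ Icc 1 d, (p - gsaProfile d L c) i = 0 := by
    simp only [Pi.sub_apply, sum_sub_distrib, hsum, hsum_star, sub_self]
  have hmonovary : MonovaryOn (gsaProfile d L c) (p - gsaProfile d L c) ↑(Icc 1 d) := by
    rw [coe_Icc]
    exact ((gsaProfile_antitone hc.le).antitoneOn _).monovaryOn (antitoneOn_sub_gsaProfile hgap)
  have hfirst_order := hmonovary.sum_mul_nonneg_of_sum_eq_zero hsum_sub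
  refine ⟨sum_sq_le_sum_sq_of_sum_mul_sub_nonneg hfirst_order, ?_⟩
  simpa only [mem_Icc, and_imp] using sum_sq_eq_sum_sq_iff_of_sum_mul_sub_nonneg hfirst_order
end

section
/- Let r_{k-1}, r_k > 0, μ ∈ ℝ, δ ∈ (1/4, 1], with μ² ≤ 1/4 and r_k < (δ - μ²) r_{k-1}. Define r'_{k-1} = r_k + μ² r_{k-1} and r'_k = r_{k-1} r_k / r'_{k-1}. Then r'_{k-1} · r'_k = r_{k-1} · r_k, and r'_{k-1} < δ · r_{k-1} ≤ r_{k-1}. -/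
/-- Lovász swap update formulas: the product of the two affected squared
GSO norms is conserved, and the new leading norm contracts by factor δ. -/
theorem lovasz_swap_update
    (r1 r2 μ δ : ℝ) (hr1 : 0 < r1) (hr2 : 0 < r2)
    (hμ : μ ^ 2 ≤ 1 / 4) (hδ1 : 1 / 4 < δ) (hδ2 : δ ≤ 1)
    (hlov : r2 < (δ - μ ^ 2) * r1)
    (r1' r2' : ℝ)
    (hr1' : r1' = r2 + μ ^ 2 * r1)
    (hr2' : r2' = r1 * r2 / r1') :
    r1' * r2' = r1 * r2 ∧ r1' < δ * r1 ∧ δ * r1 ≤ r1 := by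
  have hpos : 0 < r1' := by rw [hr1']; positivity
  have hne : r1' ≠ 0 := ne_of_gt hpos
  refine ⟨by rw [hr2']; field_simp, ?_, ?_⟩
  · rw [hr1']; nlinarith
  · nlinarith
end
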